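/- Let p be the mesh pattern (12, {(0,0),(0,1),(0,2),(1,0),(1,2),(2,0),(2,1)}). A permutation π of length n ≥ 2 contains p if and only if π(1) = 1 and the permutation of length n−1 that is order-isomorphic to π(2)π(3)⋯π(n) has a strong fixed point. Consequently, the number of permutations of length n avoiding p equals n! − (n−1)! + g_{n−1}, where g_m denotes the number of permutations of length m with no strong fixed point. -/

import Mathlib

/-- 1-based position boundaries of an occurrence: `posOf x 0 = 0`,
`posOf x i = x_i` (1-based) for `1 ≤ i ≤ k`, and `posOf x i = n+1` for `i > k`. -/
def posOf {k n : ℕ} (x : Fin k → Fin n) (i : ℕ) : ℕ :=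
  if h : 1 ≤ i ∧ i ≤ k then (x ⟨i - 1, by omega⟩ : ℕ) + 1
  else if i = 0 then 0 else n + 1

/-- 1-based value boundaries of an occurrence: `valOf τ x π 0 = 0`,
`valOf τ x π j = y_j`, the `j`-th smallest of the values `π(x_1),…,π(x_k)`
(which equals `π(x_{τ⁻¹(j)})` for an occurrence of the classical pattern `τ`),
and `n+1` for `j > k`. -/
def valOf {k n : ℕ} (τ : Equiv.Perm (Fin k)) (x : Fin k → Fin n)
    (π : Equiv.Perm (Fin n)) (j : ℕ) : ℕ :=
  if h : 1 ≤ j ∧ j ≤ k then (π (x (τ.symm ⟨j - 1, by omega⟩)) : ℕ) + 1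
  else if j = 0 then 0 else n + 1

/-- `π` (a permutation of length `n`, 0-indexed via `Fin n`) contains the mesh
pattern `(τ, R)`, where boxes in `R` are given with 0-based coordinates in `[0,k]²`.
All positions/values are converted to 1-based via `+1`. -/
def MeshOccursIn {k n : ℕ} (τ : Equiv.Perm (Fin k)) (R : Set (ℕ × ℕ))
    (π : Equiv.Perm (Fin n)) : Prop :=
  ∃ x : Fin k → Fin n, StrictMono x ∧
    (∀ a b : Fin k, π (x a) < π (x b) ↔ τ a < τ b) ∧
    ∀ r ∈ R, ∀ z : Fin n,
      ¬ (posOf x r.1 < (z : ℕ) + 1 ∧ (z : ℕ) + 1 < posOf x (r.1 + 1) ∧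
         valOf τ x π r.2 < (π z : ℕ) + 1 ∧ (π z : ℕ) + 1 < valOf τ x π (r.2 + 1))

/-- `π` avoids the mesh pattern `(τ, R)`. -/
def MeshAvoids {k n : ℕ} (τ : Equiv.Perm (Fin k)) (R : Set (ℕ × ℕ))
    (π : Equiv.Perm (Fin n)) : Prop := ¬ MeshOccursIn τ R π

/-- `π` has a strong fixed point: an index `i` with `π(i) = i`, `π(j) < i`
for all `j < i` and `π(j) > i` for all `j > i` (0-indexed). -/
def HasStrongFixedPoint {n : ℕ} (π : Equiv.Perm (Fin n)) : Prop :=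
  ∃ i : Fin n, π i = i ∧ (∀ j : Fin n, j < i → π j < i) ∧ ∀ j : Fin n, i < j → i < π j

/-! Only the boxes (1,1) and (2,2) of the pattern are unshaded. Hence an occurrence at positions
x₁ < x₂ forces x₁ = 1 and π(1) = 1, and every other entry of π lies either inside the rectangle
spanned by the two points or above and to the right of the second one: x₂ is a split point, all
values to its left being smaller and all values to its right larger. Counting the values below
π(x₂) shows that a split point of a permutation is a strong fixed point, and since π(1) = 1 the
split points of π beyond 1 are those of the standardisation of π(2)⋯π(n). Permutations fixing 1
correspond bijectively to their tails, which gives the count. -/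

open Equiv Finset

section SplitPoint

variable {α β : Type*} [Preorder α] [Preorder β]

def IsSplitPoint (f : α → β) (i : α) : Prop :=
  (∀ j, j < i → f j < f i) ∧ ∀ j, i < j → f i < f j

theorem isSplitPoint_congr {γ : Type*} [Preorder γ] {f : α → β} {g : α → γ}
    (h : ∀ a b, f a < f b ↔ g a < g b) (i : α) : IsSplitPoint f i ↔ IsSplitPoint g i := by
  simp only [IsSplitPoint, h]

theorem isSplitPoint_succ_iff {n : ℕ} {f : Fin (n + 1) → β} {i : Fin n} :
    IsSplitPoint f i.succ ↔ f 0 < f i.succ ∧ IsSplitPoint (f ∘ Fin.succ) i := by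
  simp only [IsSplitPoint, Fin.forall_fin_succ, Fin.succ_pos, Fin.succ_lt_succ_iff,
    Fin.not_lt_zero, Function.comp_apply, true_implies, false_implies, true_and, and_assoc]

end SplitPoint

-- σ maps the points left of i injectively below σ i and those right of i above it, so
-- i ≤ σ i and n - 1 - i ≤ n - 1 - σ i.
theorem IsSplitPoint.apply_eq {n : ℕ} {σ : Perm (Fin n)} {i : Fin n} (h : IsSplitPoint σ i) :
    σ i = i := by
  have hle : (i : ℕ) ≤ σ i := by
    simpa using card_le_card_of_injOn σ (s := Iio i) (t := Iio (σ i))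
      (fun j hj => by simpa using h.1 j (by simpa using hj)) σ.injective.injOn
  have hge : n - 1 - (i : ℕ) ≤ n - 1 - σ i := by
    simpa using card_le_card_of_injOn σ (s := Ioi i) (t := Ioi (σ i))
      (fun j hj => by simpa using h.2 j (by simpa using hj)) σ.injective.injOn
  have := (σ i).isLt
  ext; omega

theorem hasStrongFixedPoint_iff {n : ℕ} {σ : Perm (Fin n)} :
    HasStrongFixedPoint σ ↔ ∃ i, IsSplitPoint σ i := by
  refine exists_congr fun i => ⟨fun ⟨hfix, hlt, hgt⟩ => ?_, fun h => ?_⟩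
  · rw [IsSplitPoint, hfix]; exact ⟨hlt, hgt⟩
  · have hfix := h.apply_eq
    obtain ⟨hlt, hgt⟩ := h
    rw [hfix] at hlt hgt
    exact ⟨hfix, hlt, hgt⟩

section Boundaries

variable {k n : ℕ}

@[simp] theorem posOf_zero (x : Fin k → Fin n) : posOf x 0 = 0 := by simp [posOf]

@[simp] theorem posOf_one (x : Fin (k + 1) → Fin n) : posOf x 1 = x 0 + 1 := by simp [posOf]

@[simp] theorem posOf_two (x : Fin (k + 2) → Fin n) : posOf x 2 = x 1 + 1 := by simp [posOf]

@[simp] theorem posOf_of_lt {x : Fin k → Fin n} {i : ℕ} (h : k < i) : posOf x i = n + 1 := by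
  rw [posOf, dif_neg (by omega), if_neg (by omega)]

@[simp] theorem valOf_zero (τ : Perm (Fin k)) (x : Fin k → Fin n) (π : Perm (Fin n)) :
    valOf τ x π 0 = 0 := by
  simp [valOf]

@[simp] theorem valOf_one (τ : Perm (Fin (k + 1))) (x : Fin (k + 1) → Fin n)
    (π : Perm (Fin n)) : valOf τ x π 1 = π (x (τ.symm 0)) + 1 := by
  simp [valOf]

@[simp] theorem valOf_two (τ : Perm (Fin (k + 2))) (x : Fin (k + 2) → Fin n)
    (π : Perm (Fin n)) : valOf τ x π 2 = π (x (τ.symm 1)) + 1 := by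
  simp [valOf]

@[simp] theorem valOf_of_lt {τ : Perm (Fin k)} {x : Fin k → Fin n} {π : Perm (Fin n)} {j : ℕ}
    (h : k < j) : valOf τ x π j = n + 1 := by
  rw [valOf, dif_neg (by omega), if_neg (by omega)]

end Boundaries

def shading : Set (ℕ × ℕ) := {(0,0),(0,1),(0,2),(1,0),(1,2),(2,0),(2,1)}

theorem meshOccursIn_shading_iff {n : ℕ} {π : Perm (Fin n)} :
    MeshOccursIn (1 : Perm (Fin 2)) shading π ↔
      ∃ a b, a < b ∧ π a < π b ∧ ∀ z, z ≠ a → z ≠ b →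
        (a < z ∧ z < b ∧ π a < π z ∧ π z < π b) ∨ (b < z ∧ π b < π z) := by
  simp only [MeshOccursIn, shading, Set.mem_insert_iff, Set.mem_singleton_iff, forall_eq_or_imp,
    forall_eq, posOf_zero, posOf_one, posOf_two, posOf_of_lt (by norm_num : 2 < 3), valOf_zero,
    valOf_one, valOf_two, valOf_of_lt (by norm_num : 2 < 3), Perm.one_def, Equiv.refl_symm,
    Equiv.refl_apply, Nat.reduceAdd]
  constructor
  · rintro ⟨x, hx, hord, b00, b01, b02, b10, b12, b20, b21⟩
    refine ⟨x 0, x 1, hx zero_lt_one, (hord 0 1).2 zero_lt_one, fun z ha hb => ?_⟩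
    have hπa : (π z : ℕ) ≠ π (x 0) := Fin.val_injective.ne (π.injective.ne ha)
    have hπb : (π z : ℕ) ≠ π (x 1) := Fin.val_injective.ne (π.injective.ne hb)
    have := z.isLt
    have := (π z).isLt
    have := b00 z; have := b01 z; have := b02 z; have := b10 z; have := b12 z; have := b20 z
    have := b21 z
    simp only [Fin.lt_def, ne_eq, Fin.ext_iff] at *
    omega
  · rintro ⟨a, b, hab, hπ, hcell⟩
    refine ⟨![a, b], Fin.strictMono_iff_lt_succ.2 fun i => by fin_cases i; simpa, ?_, ?_⟩
    · intro i j
      fin_cases i <;> fin_cases j <;> simp [hπ, hπ.not_gt]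
    · simp only [Matrix.cons_val_zero, Matrix.cons_val_one]
      simp only [Fin.lt_def, ne_eq, Fin.ext_iff] at hcell hab hπ
      refine ⟨?_, ?_, ?_, ?_, ?_, ?_, ?_⟩ <;> intro z <;> have := hcell z <;> omega

theorem Equiv.Perm.apply_zero_lt_apply {n : ℕ} {π : Perm (Fin (n + 1))} (h0 : π 0 = 0)
    {z : Fin (n + 1)} (hz : z ≠ 0) : π 0 < π z := by
  rw [h0, Fin.pos_iff_ne_zero, ← h0]
  exact π.injective.ne hz

section Occurrence

variable {m : ℕ} {π : Perm (Fin (m + 2))}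

theorem meshOccursIn_shading_iff_isSplitPoint :
    MeshOccursIn (1 : Perm (Fin 2)) shading π ↔
      π 0 = 0 ∧ ∃ i : Fin (m + 1), IsSplitPoint π i.succ := by
  rw [meshOccursIn_shading_iff]
  constructor
  · rintro ⟨a, b, hab, hπ, hcell⟩
    obtain rfl : a = 0 := by
      by_contra ha
      have hb : (0 : Fin (m + 2)) ≠ b := ((Fin.zero_le a).trans_lt hab).ne
      simpa using hcell 0 (Ne.symm ha) hb
    have h0 : π 0 = 0 := by
      by_contra h0
      have hz0 : π.symm 0 ≠ 0 := fun h => h0 (by simpa using (congrArg π h).symm)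
      have hzb : π.symm 0 ≠ b := fun h => by simp [← h] at hπ
      simpa using hcell _ hz0 hzb
    refine ⟨h0, b.pred hab.ne', ?_⟩
    rw [Fin.succ_pred]
    constructor
    · intro j hj
      rcases eq_or_ne j 0 with rfl | hj0
      · exact hπ
      · rcases hcell j hj0 hj.ne with h | h
        · exact h.2.2.2
        · exact absurd h.1 hj.not_gt
    · intro j hj
      rcases hcell j (hab.trans hj).ne' hj.ne' with h | h
      · exact absurd h.2.1 hj.not_gt
      · exact h.2
  · rintro ⟨h0, i, hlt, hgt⟩
    refine ⟨0, i.succ, i.succ_pos, π.apply_zero_lt_apply h0 i.succ_ne_zero, fun z hz0 hzi => ?_⟩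
    rcases lt_or_gt_of_ne hzi with h | h
    · exact Or.inl ⟨Fin.pos_iff_ne_zero.2 hz0, h, π.apply_zero_lt_apply h0 hz0, hlt z h⟩
    · exact Or.inr ⟨h, hgt z h⟩

theorem meshOccursIn_shading_iff_of_lt_iff {σ : Perm (Fin (m + 1))}
    (hσ : ∀ a b, σ a < σ b ↔ π a.succ < π b.succ) :
    MeshOccursIn (1 : Perm (Fin 2)) shading π ↔ π 0 = 0 ∧ HasStrongFixedPoint σ := by
  rw [meshOccursIn_shading_iff_isSplitPoint, hasStrongFixedPoint_iff]
  refine and_congr_right fun h0 => exists_congr fun i => ?_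
  rw [isSplitPoint_succ_iff, isSplitPoint_congr hσ,
    and_iff_right (π.apply_zero_lt_apply h0 i.succ_ne_zero)]
  rfl

end Occurrence

theorem Equiv.Perm.decomposeFin_symm_zero_apply_succ {n : ℕ} (σ : Perm (Fin n)) (a : Fin n) :
    decomposeFin.symm (0, σ) a.succ = (σ a).succ := by
  simp [decomposeFin_symm_apply_succ]

theorem Equiv.Perm.exists_lt_iff_succ_lt_succ {n : ℕ} {π : Perm (Fin (n + 1))} (h0 : π 0 = 0) :
    ∃ σ : Perm (Fin n), ∀ a b, σ a < σ b ↔ π a.succ < π b.succ := by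
  obtain ⟨p, σ, rfl⟩ : ∃ p σ, π = decomposeFin.symm (p, σ) :=
    ⟨_, _, (decomposeFin.symm_apply_apply π).symm⟩
  obtain rfl : p = 0 := by rwa [decomposeFin_symm_apply_zero] at h0
  exact ⟨σ, fun a b => by simp only [decomposeFin_symm_zero_apply_succ, Fin.succ_lt_succ_iff]⟩

theorem meshOccursIn_shading_iff_exists {m : ℕ} {π : Perm (Fin (m + 2))} :
    MeshOccursIn (1 : Perm (Fin 2)) shading π ↔
      π 0 = 0 ∧ ∃ σ : Perm (Fin (m + 1)),
        (∀ a b, σ a < σ b ↔ π a.succ < π b.succ) ∧ HasStrongFixedPoint σ := by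
  constructor
  · intro h
    have h0 := (meshOccursIn_shading_iff_isSplitPoint.1 h).1
    obtain ⟨σ, hσ⟩ := π.exists_lt_iff_succ_lt_succ h0
    exact ⟨h0, σ, hσ, ((meshOccursIn_shading_iff_of_lt_iff hσ).1 h).2⟩
  · rintro ⟨h0, σ, hσ, hfix⟩
    exact (meshOccursIn_shading_iff_of_lt_iff hσ).2 ⟨h0, hfix⟩

theorem card_meshOccursIn_shading (m : ℕ) :
    Nat.card {π : Perm (Fin (m + 2)) // MeshOccursIn (1 : Perm (Fin 2)) shading π} =
      Nat.card {σ : Perm (Fin (m + 1)) // HasStrongFixedPoint σ} := by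
  have hocc : ∀ q : Fin (m + 2) × Perm (Fin (m + 1)),
      q.1 = 0 ∧ HasStrongFixedPoint q.2 ↔
        MeshOccursIn (1 : Perm (Fin 2)) shading (Perm.decomposeFin.symm q) := by
    rintro ⟨p, σ⟩
    by_cases hp : p = 0
    · subst hp
      rw [meshOccursIn_shading_iff_of_lt_iff (σ := σ) fun a b => by
        simp only [Perm.decomposeFin_symm_zero_apply_succ, Fin.succ_lt_succ_iff]]
      simp [Perm.decomposeFin_symm_apply_zero]
    · refine iff_of_false (fun h => hp h.1) fun h => hp ?_
      simpa [Perm.decomposeFin_symm_apply_zero] using (meshOccursIn_shading_iff_isSplitPoint.1 h).1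
  rw [← Nat.card_congr (Perm.decomposeFin.symm.subtypeEquiv hocc),
    Nat.card_congr (subtypeProdEquivProd (p := (· = 0)) (q := HasStrongFixedPoint)),
    Nat.card_prod, Nat.card_unique, one_mul]

theorem Nat.card_subtype_add_card_subtype_not {α : Type*} [Finite α] (p : α → Prop) :
    Nat.card {a // p a} + Nat.card {a // ¬ p a} = Nat.card α := by
  classical
  rw [← Nat.card_congr (Equiv.sumCompl p), Nat.card_sum]

/-- For `n ≥ 2`, a permutation `π` of length `n` contains
`(12, {(0,0),(0,1),(0,2),(1,0),(1,2),(2,0),(2,1)})` iff `π(1) = 1` and the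
permutation of length `n-1` order-isomorphic to `π(2)⋯π(n)` has a strong fixed
point; hence the number of avoiders is `n! − (n-1)! + g_{n-1}` with `g_m` the
number of permutations of length `m` without strong fixed points. -/
theorem stmt12 (n : ℕ) (hn : 2 ≤ n) :
    (∀ π : Equiv.Perm (Fin n),
      MeshOccursIn (1 : Equiv.Perm (Fin 2))
          {(0,0),(0,1),(0,2),(1,0),(1,2),(2,0),(2,1)} π ↔
        (π ⟨0, by omega⟩ = ⟨0, by omega⟩ ∧
          ∃ σ : Equiv.Perm (Fin (n - 1)),
            (∀ a b : Fin (n - 1),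
              σ a < σ b ↔
                π ⟨(a : ℕ) + 1, by have := a.isLt; omega⟩ <
                  π ⟨(b : ℕ) + 1, by have := b.isLt; omega⟩) ∧
            HasStrongFixedPoint σ)) ∧
    Nat.card {π : Equiv.Perm (Fin n) //
        MeshAvoids (1 : Equiv.Perm (Fin 2))
          {(0,0),(0,1),(0,2),(1,0),(1,2),(2,0),(2,1)} π} =
      n.factorial - (n - 1).factorial +
        Nat.card {σ : Equiv.Perm (Fin (n - 1)) // ¬ HasStrongFixedPoint σ} := by
  obtain ⟨m, rfl⟩ : ∃ m, n = m + 2 := ⟨n - 2, by omega⟩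
  refine ⟨fun π => meshOccursIn_shading_iff_exists, ?_⟩
  have hocc := card_meshOccursIn_shading m
  have hperm :=
    Nat.card_subtype_add_card_subtype_not (MeshOccursIn (n := m + 2) (1 : Perm (Fin 2)) shading)
  have htail := Nat.card_subtype_add_card_subtype_not (@HasStrongFixedPoint (m + 1))
  have hle := Nat.factorial_le (show m + 1 ≤ m + 2 by omega)
  simp only [Nat.card_perm, Nat.card_fin] at hperm htail
  change Nat.card {π // ¬ MeshOccursIn (1 : Perm (Fin 2)) shading π} =
    (m + 2).factorial - (m + 1).factorial +
      Nat.card {σ : Perm (Fin (m + 1)) // ¬ HasStrongFixedPoint σ}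
  omega
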